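/- Suppose the single-antenna problem is feasible and x_min = min{x_p, x_s}, x_max = max{x_p, x_s}. Then there exists an optimal solution (x*, α_p*) of the problem maximizing (1−α_p)Pη/(((x−x_s)² + C_s)σ_s²) subject to the two QoS constraints with x_min ≤ x* ≤ x_max. Moreover, any optimal x* satisfies x_min ≤ x* ≤ x_max. -/
import Mathlib


/-- Feasibility predicate for the single-antenna CR-NOMA problem. -/
def Feas (P η γp σp2 σs2 Cp Cs xp xs x αp : ℝ) : Prop :=
  0 ≤ αp ∧ αp ≤ 1 ∧
  (P * η + P * η * γp) * αp - (x - xp) ^ 2 * σp2 * γp ≥ P * η * γp + Cp * σp2 * γp ∧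
  (P * η + P * η * γp) * αp - (x - xs) ^ 2 * σs2 * γp ≥ P * η * γp + Cs * σs2 * γp

/-- Objective of the single-antenna CR-NOMA problem. -/
noncomputable def Obj (P η σs2 Cs xs x αp : ℝ) : ℝ :=
  (1 - αp) * P * η / (((x - xs) ^ 2 + Cs) * σs2)

private lemma clamp_sq_le {a b x y : ℝ} (h1 : a ≤ y) (h2 : y ≤ b) :
    (max a (min b x) - y) ^ 2 ≤ (x - y) ^ 2 := by
  rcases le_total x a with h | h
  · rw [min_eq_right (h.trans (h1.trans h2)), max_eq_left h]; nlinarith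
  · rcases le_total x b with h' | h'
    · rw [min_eq_right h', max_eq_right h]
    · rw [min_eq_left h', max_eq_right (h1.trans h2)]; nlinarith

private lemma clamp_sq_lt {a b x y : ℝ} (h1 : a ≤ y) (h2 : y ≤ b)
    (hx : x < a ∨ b < x) :
    (max a (min b x) - y) ^ 2 < (x - y) ^ 2 := by
  rcases hx with h | h
  · rw [min_eq_right (h.le.trans (h1.trans h2)), max_eq_left h.le]; nlinarith
  · rw [min_eq_left h.le, max_eq_right (h1.trans h2)]; nlinarith

private lemma feas_clamp {P η γp σp2 σs2 Cp Cs xp xs x αp : ℝ}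
    (hσp : 0 ≤ σp2) (hσs : 0 ≤ σs2) (hγ : 0 ≤ γp)
    (hF : Feas P η γp σp2 σs2 Cp Cs xp xs x αp) :
    Feas P η γp σp2 σs2 Cp Cs xp xs (max (min xp xs) (min (max xp xs) x)) αp := by
  obtain ⟨h0, h1, h2, h3⟩ := hF
  have hp := clamp_sq_le (a := min xp xs) (b := max xp xs) (x := x) (y := xp)
    (min_le_left _ _) (le_max_left _ _)
  have hs := clamp_sq_le (a := min xp xs) (b := max xp xs) (x := x) (y := xs)
    (min_le_right _ _) (le_max_right _ _)
  refine ⟨h0, h1, ?_, ?_⟩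
  · nlinarith [mul_le_mul_of_nonneg_right (mul_le_mul_of_nonneg_right hp hσp) hγ]
  · nlinarith [mul_le_mul_of_nonneg_right (mul_le_mul_of_nonneg_right hs hσs) hγ]

private lemma obj_mono {P η σs2 Cs xs x x' αp : ℝ}
    (hP : 0 < P) (hη : 0 < η) (hσs : 0 < σs2) (hCs : 0 < Cs)
    (hαp : αp ≤ 1) (h : (x' - xs) ^ 2 ≤ (x - xs) ^ 2) :
    Obj P η σs2 Cs xs x αp ≤ Obj P η σs2 Cs xs x' αp := by
  unfold Obj
  have hnum : 0 ≤ (1 - αp) * P * η := by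
    have : 0 ≤ 1 - αp := by linarith
    positivity
  have hden' : 0 < ((x' - xs) ^ 2 + Cs) * σs2 := by positivity
  exact div_le_div_of_nonneg_left hnum hden' (by nlinarith)

set_option maxHeartbeats 1600000 in
/-- Lemma 1: there is an optimal solution with x between the users, and any
optimal x lies between the users. -/
theorem stmt2 (P η γp σp2 σs2 Cp Cs xp xs : ℝ)
    (hP : 0 < P) (hη : 0 < η) (hγ : 0 < γp) (hσp : 0 < σp2) (hσs : 0 < σs2)
    (hCp : 0 < Cp) (hCs : 0 < Cs)
    (hfeas : ∃ x αp : ℝ, Feas P η γp σp2 σs2 Cp Cs xp xs x αp) :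
    (∃ xstar astar : ℝ, Feas P η γp σp2 σs2 Cp Cs xp xs xstar astar ∧
      (∀ x αp : ℝ, Feas P η γp σp2 σs2 Cp Cs xp xs x αp →
        Obj P η σs2 Cs xs x αp ≤ Obj P η σs2 Cs xs xstar astar) ∧
      min xp xs ≤ xstar ∧ xstar ≤ max xp xs) ∧
    (∀ xstar astar : ℝ, Feas P η γp σp2 σs2 Cp Cs xp xs xstar astar →
      (∀ x αp : ℝ, Feas P η γp σp2 σs2 Cp Cs xp xs x αp →
        Obj P η σs2 Cs xs x αp ≤ Obj P η σs2 Cs xs xstar astar) →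
      min xp xs ≤ xstar ∧ xstar ≤ max xp xs) := by
  constructor
  · -- existence of an optimum inside the interval, via compactness
    obtain ⟨x0, a0, hF0⟩ := hfeas
    set m := min xp xs with hm
    set M := max xp xs with hM
    set S : Set (ℝ × ℝ) :=
      {p | Feas P η γp σp2 σs2 Cp Cs xp xs p.1 p.2 ∧ p.1 ∈ Set.Icc m M} with hS
    have hclosed : IsClosed S := by
      have : S = {p : ℝ × ℝ | 0 ≤ p.2} ∩ {p | p.2 ≤ 1} ∩
          {p | P * η * γp + Cp * σp2 * γp ≤
            (P * η + P * η * γp) * p.2 - (p.1 - xp) ^ 2 * σp2 * γp} ∩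
          {p | P * η * γp + Cs * σs2 * γp ≤
            (P * η + P * η * γp) * p.2 - (p.1 - xs) ^ 2 * σs2 * γp} ∩
          {p | m ≤ p.1} ∩ {p | p.1 ≤ M} := by
        ext p
        simp only [hS, Feas, Set.mem_setOf_eq, Set.mem_inter_iff, Set.mem_Icc, ge_iff_le]
        tauto
      rw [this]
      repeat' apply IsClosed.inter
      all_goals apply isClosed_le <;> fun_prop
    have hsub : S ⊆ Set.Icc m M ×ˢ Set.Icc (0 : ℝ) 1 :=
      fun p hp => ⟨hp.2, hp.1.1, hp.1.2.1⟩
    have hcpt : IsCompact S :=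
      (isCompact_Icc.prod isCompact_Icc).of_isClosed_subset hclosed hsub
    have hne : S.Nonempty := by
      refine ⟨(max m (min M x0), a0), feas_clamp hσp.le hσs.le hγ.le hF0, ?_⟩
      exact ⟨le_max_left _ _, max_le min_le_max (min_le_left _ _)⟩
    have hcont : Continuous fun p : ℝ × ℝ => Obj P η σs2 Cs xs p.1 p.2 := by
      unfold Obj
      apply Continuous.div (by fun_prop) (by fun_prop)
      intro p
      positivity
    obtain ⟨p, hpS, hpmax⟩ := hcpt.exists_isMaxOn hne hcont.continuousOn
    refine ⟨p.1, p.2, hpS.1, ?_, hpS.2.1, hpS.2.2⟩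
    intro x αp hF
    have hmem : (max m (min M x), αp) ∈ S :=
      ⟨feas_clamp hσp.le hσs.le hγ.le hF,
        le_max_left _ _, max_le min_le_max (min_le_left _ _)⟩
    calc Obj P η σs2 Cs xs x αp
        ≤ Obj P η σs2 Cs xs (max m (min M x)) αp :=
          obj_mono hP hη hσs hCs hF.2.1
            (clamp_sq_le (min_le_right _ _) (le_max_right _ _))
      _ ≤ Obj P η σs2 Cs xs p.1 p.2 := hpmax hmem
  · -- any optimal x lies in the interval
    intro xstar astar hF hopt
    by_contra hcon
    have hx : xstar < min xp xs ∨ max xp xs < xstar := by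
      rcases not_and_or.1 hcon with h | h
      · exact Or.inl (not_le.1 h)
      · exact Or.inr (not_le.1 h)
    obtain ⟨x', hx'⟩ : ∃ y : ℝ, y = max (min xp xs) (min (max xp xs) xstar) := ⟨_, rfl⟩
    have hdp : (x' - xp) ^ 2 < (xstar - xp) ^ 2 := by
      rw [hx']; exact clamp_sq_lt (min_le_left _ _) (le_max_left _ _) hx
    have hds : (x' - xs) ^ 2 < (xstar - xs) ^ 2 := by
      rw [hx']; exact clamp_sq_lt (min_le_right _ _) (le_max_right _ _) hx
    obtain ⟨h0, h1, h2, h3⟩ := hF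
    have hDpos : 0 < P * η + P * η * γp := by positivity
    obtain ⟨d, hd⟩ : ∃ y : ℝ, y = min (((xstar - xp) ^ 2 - (x' - xp) ^ 2) * σp2)
      (((xstar - xs) ^ 2 - (x' - xs) ^ 2) * σs2) := ⟨_, rfl⟩
    obtain ⟨ε, hε⟩ : ∃ y : ℝ, y = d * γp / (P * η + P * η * γp) := ⟨_, rfl⟩
    have hdpos : 0 < d := by
      rw [hd]; exact lt_min (by nlinarith) (by nlinarith)
    have hεpos : 0 < ε := hε ▸ div_pos (mul_pos hdpos hγ) hDpos
    have hkey : (P * η + P * η * γp) * ε = d * γp := by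
      rw [hε]; field_simp
    have hmin1 : d ≤ ((xstar - xp) ^ 2 - (x' - xp) ^ 2) * σp2 := hd ▸ min_le_left _ _
    have hmin2 : d ≤ ((xstar - xs) ^ 2 - (x' - xs) ^ 2) * σs2 := hd ▸ min_le_right _ _
    have con1 : (P * η + P * η * γp) * (astar - ε) - (x' - xp) ^ 2 * σp2 * γp ≥
        P * η * γp + Cp * σp2 * γp := by
      nlinarith [mul_le_mul_of_nonneg_right hmin1 hγ.le]
    have con2 : (P * η + P * η * γp) * (astar - ε) - (x' - xs) ^ 2 * σs2 * γp ≥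
        P * η * γp + Cs * σs2 * γp := by
      nlinarith [mul_le_mul_of_nonneg_right hmin2 hγ.le]
    have hα'0 : 0 ≤ astar - ε := by
      have hpos : 0 < (P * η + P * η * γp) * (astar - ε) := by
        have t1 : 0 ≤ (x' - xs) ^ 2 * σs2 * γp :=
          mul_nonneg (mul_nonneg (sq_nonneg _) hσs.le) hγ.le
        have t2 : 0 < P * η * γp := by positivity
        have t3 : 0 < Cs * σs2 * γp := by positivity
        linarith
      by_contra hneg
      push_neg at hneg
      have : (P * η + P * η * γp) * (astar - ε) < 0 :=
        mul_neg_of_pos_of_neg hDpos (by linarith)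
      linarith
    have hF' : Feas P η γp σp2 σs2 Cp Cs xp xs x' (astar - ε) :=
      ⟨hα'0, by linarith, con1, con2⟩
    have hlt : Obj P η σs2 Cs xs xstar astar < Obj P η σs2 Cs xs x' (astar - ε) := by
      unfold Obj
      have hden : 0 < ((xstar - xs) ^ 2 + Cs) * σs2 := by positivity
      have hden' : 0 < ((x' - xs) ^ 2 + Cs) * σs2 := by positivity
      rw [div_lt_div_iff₀ hden hden']
      have hnum : 0 ≤ (1 - astar) * P * η := by
        have : 0 ≤ 1 - astar := by linarith
        positivity
      have hdenle : ((x' - xs) ^ 2 + Cs) * σs2 ≤ ((xstar - xs) ^ 2 + Cs) * σs2 :=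
        mul_le_mul_of_nonneg_right (by linarith) hσs.le
      have hnumlt : (1 - astar) * P * η < (1 - (astar - ε)) * P * η := by
        nlinarith [mul_pos hεpos (mul_pos hP hη)]
      calc (1 - astar) * P * η * (((x' - xs) ^ 2 + Cs) * σs2)
          ≤ (1 - astar) * P * η * (((xstar - xs) ^ 2 + Cs) * σs2) :=
            mul_le_mul_of_nonneg_left hdenle hnum
        _ < (1 - (astar - ε)) * P * η * (((xstar - xs) ^ 2 + Cs) * σs2) :=
            mul_lt_mul_of_pos_right hnumlt hden
    exact absurd (hopt x' (astar - ε) hF') (not_le.2 hlt)
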